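/- Assume φ ∈ (0,1), ω > 0, μ > 0, b > 0 and r := bφ − μ(1−φ) > 0; set ρ* := (1 − e^{μ(1−φ)ω − bφω})/(1 − e^{−bφω}). Let A = (a_{ij}) be a real 3×3 matrix and suppose u : ℝ → ℝ³ satisfies the Lotka–Volterra competition system at every t ∈ ℝ, is T-periodic for some T > 0, and has all components strictly positive at every time. Suppose (r/b)ω = k T for some positive integer k (equivalently, the ratio η = (ω/T)/(b/r) is the integer k). Then for every s ∈ ℝ there exists a continuous v : [0, ω] → ℝ³ with v(0) = v(ω) = ρ*·u(s), all components of v strictly positive, such that each component of v has derivative −μ·v_i(t) at every t ∈ (0, (1−φ)ω) and v satisfies the Lotka–Volterra competition system at every t ∈ ((1−φ)ω, ω). Moreover, if u is nonconstant, the set {ρ*·u(s) : s ∈ ℝ} of initial values of such positive ω-periodic solutions is infinite; hence the Poincaré map of the seasonal system has more than one positive fixed point. -/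

import Mathlib

/-!
If `u` solves `u' = u (b - A u)`, `ρ` solves the logistic equation `ρ' = b ρ (1 - ρ)` and
`τ' = ρ`, then `ρ(t) • u(τ(t))` solves the same system. Start at `ρ* • u(s)`: the death phase
brings it to `p • u(s)` with `p = e^{-μ(1-φ)ω} ρ*`, and the explicit logistic solution with
`ρ(0) = p`, run for time `φω`, comes back to `ρ*` while its clock `τ` advances by `rω/b = kT`,
a whole number of periods of `u`. So the seasonal orbit closes up at `ρ* • u(s)`. These initial
values form the connected set `ρ* • u(ℝ)`, which is infinite as soon as `u` is nonconstant.
-/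

open Real

section Rescaling

variable {ι : Type*} [Fintype ι] (A : Matrix ι ι ℝ) (b : ℝ)

theorem hasDerivAt_mul_comp_of_logistic {u : ℝ → ι → ℝ} {ρ τ : ℝ → ℝ} {t : ℝ} {i : ι}
    (hu : HasDerivAt (fun s => u s i) (u (τ t) i * (b - ∑ j, A i j * u (τ t) j)) (τ t))
    (hρ : HasDerivAt ρ (b * ρ t * (1 - ρ t)) t) (hτ : HasDerivAt τ (ρ t) t) :
    HasDerivAt (fun s => ρ s * u (τ s) i)
      (ρ t * u (τ t) i * (b - ∑ j, A i j * (ρ t * u (τ t) j))) t := by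
  refine (hρ.mul (hu.comp t hτ)).congr_deriv ?_
  simp only [Function.comp_apply, mul_left_comm _ (ρ t), ← Finset.mul_sum]
  ring

end Rescaling

section Logistic

variable (b p : ℝ)

noncomputable def logistic (t : ℝ) : ℝ := p * exp (b * t) / (p * exp (b * t) + (1 - p))

noncomputable def logisticIntegral (t : ℝ) : ℝ := log (p * exp (b * t) + (1 - p)) / b

variable {b p}

theorem logistic_denom_pos (hp₀ : 0 < p) (hp₁ : p ≤ 1) (b t : ℝ) :
    0 < p * exp (b * t) + (1 - p) := by
  have := mul_pos hp₀ (exp_pos (b * t))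
  linarith

theorem logistic_pos (hp₀ : 0 < p) (hp₁ : p ≤ 1) (t : ℝ) : 0 < logistic b p t :=
  div_pos (mul_pos hp₀ (exp_pos _)) (logistic_denom_pos hp₀ hp₁ b t)

@[simp] theorem logistic_zero : logistic b p 0 = p := by simp [logistic]

@[simp] theorem logisticIntegral_zero : logisticIntegral b p 0 = 0 := by simp [logisticIntegral]

theorem hasDerivAt_exp_mul (b t : ℝ) : HasDerivAt (fun t => exp (b * t)) (exp (b * t) * b) t :=
  ((hasDerivAt_id t).const_mul b |>.exp).congr_deriv (by simp)

theorem hasDerivAt_logistic (hp₀ : 0 < p) (hp₁ : p ≤ 1) (t : ℝ) :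
    HasDerivAt (logistic b p) (b * logistic b p t * (1 - logistic b p t)) t := by
  have hD := (logistic_denom_pos hp₀ hp₁ b t).ne'
  refine (((hasDerivAt_exp_mul b t).const_mul p).div
    (((hasDerivAt_exp_mul b t).const_mul p).add_const (1 - p)) hD).congr_deriv ?_
  simp only [logistic]
  field_simp

theorem hasDerivAt_logisticIntegral (hb : b ≠ 0) (hp₀ : 0 < p) (hp₁ : p ≤ 1) (t : ℝ) :
    HasDerivAt (logisticIntegral b p) (logistic b p t) t := by
  have hD := (logistic_denom_pos hp₀ hp₁ b t).ne'
  refine ((((hasDerivAt_exp_mul b t).const_mul p).add_const (1 - p)).log hD).div_const b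
    |>.congr_deriv ?_
  simp only [logistic]
  field_simp

theorem continuous_logistic (hp₀ : 0 < p) (hp₁ : p ≤ 1) : Continuous (logistic b p) :=
  Continuous.div (by fun_prop) (by fun_prop) fun t => (logistic_denom_pos hp₀ hp₁ b t).ne'

theorem continuous_logisticIntegral (hp₀ : 0 < p) (hp₁ : p ≤ 1) :
    Continuous (logisticIntegral b p) :=
  (Continuous.log (by fun_prop) fun t => (logistic_denom_pos hp₀ hp₁ b t).ne').div_const b

end Logistic

section SeasonalSolution

variable {ι : Type*} (μ b p t₁ s : ℝ) (u : ℝ → ι → ℝ)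

/-- Death phase up to `t₁`, then the logistic rescaling of `u` started at `u s`; the two pieces
meet at `p • u s`. -/
noncomputable def seasonalSolution (t : ℝ) (i : ι) : ℝ :=
  if t ≤ t₁ then p * exp (-μ * (t - t₁)) * u s i
  else logistic b p (t - t₁) * u (s + logisticIntegral b p (t - t₁)) i

variable {μ b p t₁ s u}

theorem seasonalSolution_of_le {t : ℝ} (ht : t ≤ t₁) (i : ι) :
    seasonalSolution μ b p t₁ s u t i = p * exp (-μ * (t - t₁)) * u s i := by
  simp [seasonalSolution, ht]

theorem seasonalSolution_of_lt {t : ℝ} (ht : t₁ < t) (i : ι) :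
    seasonalSolution μ b p t₁ s u t i =
      logistic b p (t - t₁) * u (s + logisticIntegral b p (t - t₁)) i := by
  simp [seasonalSolution, ht.not_ge]

theorem continuous_seasonalSolution (hp₀ : 0 < p) (hp₁ : p ≤ 1) (hu : Continuous u) :
    Continuous (seasonalSolution μ b p t₁ s u) := by
  refine continuous_pi fun i => Continuous.if_le (by fun_prop) ?_ continuous_id continuous_const ?_
  · exact ((continuous_logistic hp₀ hp₁).comp (continuous_sub_right t₁)).mul
      ((continuous_apply i).comp (hu.comp (continuous_const.add
        ((continuous_logisticIntegral hp₀ hp₁).comp (continuous_sub_right t₁)))))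
  · rintro t rfl
    simp

theorem seasonalSolution_pos (hp₀ : 0 < p) (hp₁ : p ≤ 1) (hpos : ∀ t i, 0 < u t i) (t : ℝ)
    (i : ι) : 0 < seasonalSolution μ b p t₁ s u t i := by
  rcases le_or_gt t t₁ with ht | ht
  · rw [seasonalSolution_of_le ht]
    exact mul_pos (mul_pos hp₀ (exp_pos _)) (hpos s i)
  · rw [seasonalSolution_of_lt ht]
    exact mul_pos (logistic_pos hp₀ hp₁ _) (hpos _ i)

theorem hasDerivAt_seasonalSolution_of_lt {t : ℝ} (ht : t < t₁) (i : ι) :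
    HasDerivAt (fun t => seasonalSolution μ b p t₁ s u t i)
      (-μ * seasonalSolution μ b p t₁ s u t i) t := by
  have hdeath : HasDerivAt (fun t => p * exp (-μ * (t - t₁)) * u s i)
      (-μ * (p * exp (-μ * (t - t₁)) * u s i)) t := by
    refine (((((hasDerivAt_id t).sub_const t₁).const_mul (-μ)).exp.const_mul p).mul_const
      (u s i)).congr_deriv ?_
    simp only [id, mul_one]
    ring
  rw [seasonalSolution_of_le ht.le]
  refine hdeath.congr_of_eventuallyEq ?_
  filter_upwards [Iio_mem_nhds ht] with x hx
  exact seasonalSolution_of_le hx.le i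

theorem hasDerivAt_seasonalSolution_of_gt [Fintype ι] (A : Matrix ι ι ℝ) (hb : b ≠ 0)
    (hp₀ : 0 < p) (hp₁ : p ≤ 1)
    (hu : ∀ t i, HasDerivAt (fun s => u s i) (u t i * (b - ∑ j, A i j * u t j)) t)
    {t : ℝ} (ht : t₁ < t) (i : ι) :
    HasDerivAt (fun t => seasonalSolution μ b p t₁ s u t i)
      (seasonalSolution μ b p t₁ s u t i *
        (b - ∑ j, A i j * seasonalSolution μ b p t₁ s u t j)) t := by
  have hrescaled := hasDerivAt_mul_comp_of_logistic A b (hu _ i)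
    ((hasDerivAt_logistic hp₀ hp₁ (t - t₁)).comp_sub_const t t₁)
    (((hasDerivAt_logisticIntegral hb hp₀ hp₁ (t - t₁)).comp_sub_const t t₁).const_add s)
  simp only [seasonalSolution_of_lt ht]
  refine hrescaled.congr_of_eventuallyEq ?_
  filter_upwards [Ioi_mem_nhds ht] with x hx
  exact seasonalSolution_of_lt hx i

end SeasonalSolution

/-- With `x = bφω`, `y = μ(1-φ)ω` and `ρ = ρ*`: the denominator of the logistic started at
`p = e^{-y} ρ*` equals `e^{rω}` at time `φω`. -/
theorem mul_exp_add_one_sub_eq_exp_sub {x y ρ p : ℝ} (hx : x ≠ 0)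
    (hρ : ρ = (1 - exp (y - x)) / (1 - exp (-x))) (hp : p = exp (-y) * ρ) :
    p * exp x + (1 - p) = exp (x - y) := by
  have h : exp x - 1 ≠ 0 := sub_ne_zero.2 (mt (Real.exp_eq_one_iff x).1 hx)
  rw [hp, hρ, exp_sub, exp_sub, exp_neg, exp_neg]
  field_simp
  ring

theorem pos_and_le_one_of_mul_exp_add_one_sub {x y p : ℝ} (hy : 0 ≤ y) (hyx : y < x)
    (h : p * exp x + (1 - p) = exp (x - y)) : 0 < p ∧ p ≤ 1 := by
  have h₁ : 1 < exp (x - y) := one_lt_exp_iff.2 (sub_pos.2 hyx)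
  have h₂ : exp (x - y) ≤ exp x := exp_le_exp.2 (by linarith)
  constructor <;> nlinarith

theorem stmt_9_general (φ ω μ b r ρs : ℝ)
    (hφ0 : 0 < φ) (hφ1 : φ < 1) (hω : 0 < ω) (hμ : 0 < μ) (hb : 0 < b)
    (hr : r = b * φ - μ * (1 - φ)) (hrpos : 0 < r)
    (hρs : ρs = (1 - Real.exp (μ * (1 - φ) * ω - b * φ * ω)) /
      (1 - Real.exp (-(b * φ * ω))))
    (A : Matrix (Fin 3) (Fin 3) ℝ) (u : ℝ → Fin 3 → ℝ) (T : ℝ)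
    (hu : ∀ t : ℝ, ∀ i : Fin 3,
      HasDerivAt (fun s => u s i) (u t i * (b - ∑ j : Fin 3, A i j * u t j)) t)
    (hper : ∀ t : ℝ, u (t + T) = u t)
    (hpos : ∀ t : ℝ, ∀ i : Fin 3, 0 < u t i)
    (k : ℕ) (hkT : r / b * ω = (k : ℝ) * T) :
    (∀ s : ℝ, ∃ v : ℝ → Fin 3 → ℝ,
      ContinuousOn v (Set.Icc 0 ω) ∧
      (∀ i : Fin 3, v 0 i = ρs * u s i) ∧
      (∀ i : Fin 3, v ω i = ρs * u s i) ∧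
      (∀ t ∈ Set.Icc (0 : ℝ) ω, ∀ i : Fin 3, 0 < v t i) ∧
      (∀ t ∈ Set.Ioo (0 : ℝ) ((1 - φ) * ω), ∀ i : Fin 3,
        HasDerivAt (fun s => v s i) (-μ * v t i) t) ∧
      (∀ t ∈ Set.Ioo ((1 - φ) * ω) ω, ∀ i : Fin 3,
        HasDerivAt (fun s => v s i) (v t i * (b - ∑ j : Fin 3, A i j * v t j)) t)) ∧
    ((∃ t₁ t₂ : ℝ, u t₁ ≠ u t₂) →
      (Set.range fun s : ℝ => (fun i : Fin 3 => ρs * u s i)).Infinite) := by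
  have hy : 0 < μ * (1 - φ) * ω := by have := sub_pos.2 hφ1; positivity
  have hyx : μ * (1 - φ) * ω < b * φ * ω := by nlinarith [mul_pos hrpos hω]
  obtain ⟨p, hp⟩ : ∃ p, p = exp (-(μ * (1 - φ) * ω)) * ρs := ⟨_, rfl⟩
  have hD := mul_exp_add_one_sub_eq_exp_sub (by positivity) hρs hp
  obtain ⟨hp₀, hp₁⟩ := pos_and_le_one_of_mul_exp_add_one_sub hy.le hyx hD
  have hucont : Continuous u :=
    continuous_pi fun i => continuous_iff_continuousAt.2 fun t => (hu t i).continuousAt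
  refine ⟨fun s => ⟨seasonalSolution μ b p ((1 - φ) * ω) s u,
    (continuous_seasonalSolution hp₀ hp₁ hucont).continuousOn, fun i => ?_, fun i => ?_,
    fun t _ => seasonalSolution_pos hp₀ hp₁ hpos t,
    fun t ht => hasDerivAt_seasonalSolution_of_lt ht.2,
    fun t ht => hasDerivAt_seasonalSolution_of_gt A hb.ne' hp₀ hp₁ hu ht.1⟩, ?_⟩
  · have hdecay : -μ * (0 - (1 - φ) * ω) = μ * (1 - φ) * ω := by ring
    rw [seasonalSolution_of_le (by positivity), hp, hdecay, mul_right_comm _ ρs, ← exp_add,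
      neg_add_cancel, exp_zero, one_mul]
  · have hL : ω - (1 - φ) * ω = φ * ω := by ring
    rw [seasonalSolution_of_lt (by nlinarith), hL, logistic, logisticIntegral, ← mul_assoc, hD,
      log_exp]
    have hkT' : (b * φ * ω - μ * (1 - φ) * ω) / b = k * T := by rw [← hkT, hr]; ring
    rw [hkT', Function.Periodic.nat_mul hper k s, hp, exp_neg, exp_sub]
    field_simp
  · rintro ⟨t₁, t₂, hne⟩
    have hρs₀ : 0 < ρs := pos_of_mul_pos_right (hp ▸ hp₀) (exp_pos _).le
    refine (isPreconnected_range (by fun_prop)).infinite_of_nontrivial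
      ⟨_, Set.mem_range_self t₁, _, Set.mem_range_self t₂, fun h => hne ?_⟩
    funext i
    exact mul_left_cancel₀ hρs₀.ne' (congr_fun h i)

/-- Harmonic case. If the autonomous Lotka–Volterra system has a positive
`T`-periodic solution `u` and `(r/b)ω = k T` for a positive integer `k`, then every point
`ρ* • u s` is the initial value of a positive `ω`-periodic solution of the seasonal
system; and if `u` is nonconstant the set of such initial values is infinite (so the
Poincaré map has more than one positive fixed point). -/
theorem stmt_9 (φ ω μ b r ρs : ℝ)
    (hφ0 : 0 < φ) (hφ1 : φ < 1) (hω : 0 < ω) (hμ : 0 < μ) (hb : 0 < b)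
    (hr : r = b * φ - μ * (1 - φ)) (hrpos : 0 < r)
    (hρs : ρs = (1 - Real.exp (μ * (1 - φ) * ω - b * φ * ω)) /
      (1 - Real.exp (-(b * φ * ω))))
    (A : Matrix (Fin 3) (Fin 3) ℝ) (u : ℝ → Fin 3 → ℝ) (T : ℝ) (hT : 0 < T)
    (hu : ∀ t : ℝ, ∀ i : Fin 3,
      HasDerivAt (fun s => u s i) (u t i * (b - ∑ j : Fin 3, A i j * u t j)) t)
    (hper : ∀ t : ℝ, u (t + T) = u t)
    (hpos : ∀ t : ℝ, ∀ i : Fin 3, 0 < u t i)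
    (k : ℕ) (hk : 0 < k) (hkT : r / b * ω = (k : ℝ) * T) :
    (∀ s : ℝ, ∃ v : ℝ → Fin 3 → ℝ,
      ContinuousOn v (Set.Icc 0 ω) ∧
      (∀ i : Fin 3, v 0 i = ρs * u s i) ∧
      (∀ i : Fin 3, v ω i = ρs * u s i) ∧
      (∀ t ∈ Set.Icc (0 : ℝ) ω, ∀ i : Fin 3, 0 < v t i) ∧
      (∀ t ∈ Set.Ioo (0 : ℝ) ((1 - φ) * ω), ∀ i : Fin 3,
        HasDerivAt (fun s => v s i) (-μ * v t i) t) ∧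
      (∀ t ∈ Set.Ioo ((1 - φ) * ω) ω, ∀ i : Fin 3,
        HasDerivAt (fun s => v s i) (v t i * (b - ∑ j : Fin 3, A i j * v t j)) t)) ∧
    ((∃ t₁ t₂ : ℝ, u t₁ ≠ u t₂) →
      (Set.range fun s : ℝ => (fun i : Fin 3 => ρs * u s i)).Infinite) :=
  stmt_9_general φ ω μ b r ρs hφ0 hφ1 hω hμ hb hr hrpos hρs A u T hu hper hpos k hkT
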